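/- Let ω be a static environment on ℤ^{d₁+d₂} with finite jump range U which is autonomous in the first coordinates. Let 0 ≤ m < n−1, let z₁,…,z_{m+1} ∈ ℤ^{d₂} and y₁,…,y_n ∈ ℤ^{d₁}, and set x_i := (y_i, z_i) for 1 ≤ i ≤ m+1 and x₀ := 0. Then P_{0,ω}(X₁ = x₁, …, X_{m+1} = x_{m+1}, X^{(1)}_{m+2} = y_{m+2}, …, X^{(1)}_n = y_n) · P_{x_m,ω}(X^{(1)}₁ = y_{m+1}) = ω(x_m, x_{m+1} − x_m) · P_{0,ω}(X₁ = x₁, …, X_m = x_m, X^{(1)}_{m+1} = y_{m+1}, …, X^{(1)}_n = y_n). Equivalently, conditionally on the first-coordinate trajectory, (X^{(2)}_k) is a random walk in the time-dependent environment ω^Y defined by ω^Y_k(z,e) := ω(Y_k + (0,z), Y_{k+1} − Y_k + (0,e)) / ω(Y_k, Y_{k+1} − Y_k), where Y_k := (X^{(1)}_k, 0). -/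

import Mathlib

namespace AutonomousFirstCoordinates

/-- A point of `ℤ^{d₁+d₂}`, written as a pair of its first `d₁` and last `d₂`
coordinates. -/
abbrev Pt (d₁ d₂ : ℕ) := (Fin d₁ → ℤ) × (Fin d₂ → ℤ)

/-- A static environment: `ω x e` is the probability of a jump `e` from `x`. -/
abbrev SEnv (d₁ d₂ : ℕ) := Pt d₁ d₂ → Pt d₁ d₂ → ℝ

/-- `ω` is an honest static environment with jump range `U`. -/
def IsEnv (d₁ d₂ : ℕ) (U : Finset (Pt d₁ d₂)) (ω : SEnv d₁ d₂) : Prop :=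
  ∀ x, (∀ e ∈ U, 0 < ω x e) ∧ (∀ e, e ∉ U → ω x e = 0) ∧ (∑ e ∈ U, ω x e = 1)

/-- `P_{x,ω}(X₁^{(1)} = x^{(1)} + w)`: the probability that the first `d₁` coordinates of
the first jump equal `w`. -/
noncomputable def fstProb (d₁ d₂ : ℕ) (ω : SEnv d₁ d₂) (x : Pt d₁ d₂)
    (w : Fin d₁ → ℤ) : ℝ :=
  ∑' v : Fin d₂ → ℤ, ω x (w, v)

/-- The environment is autonomous in the first coordinates:
`P_{x,ω}(X₁^{(1)} = ·)` depends on `x` only through `x^{(1)}`. -/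
def Autonomous (d₁ d₂ : ℕ) (ω : SEnv d₁ d₂) : Prop :=
  ∀ x z : Pt d₁ d₂, x.1 = z.1 → ∀ w, fstProb d₁ d₂ ω x w = fstProb d₁ d₂ ω z w

/-- The probability of the exact trajectory `X 0 = 0, X 1 = xs 1, …, X n = xs n` under
`P_{0,ω}`. -/
def pathP (d₁ d₂ : ℕ) (ω : SEnv d₁ d₂) (n : ℕ) (X : Fin (n + 1) → Pt d₁ d₂) : ℝ :=
  (if X 0 = 0 then (1 : ℝ) else 0) *
    ∏ i : Fin n, ω (X i.castSucc) (X i.succ - X i.castSucc)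

/-!
Summing out the last step of a path whose first coordinates are prescribed produces the factor
`P_{X_n,ω}(X₁^{(1)} = y_{n+1} - y_n)`, which by autonomy depends on `X_n` only through `y_n`.
Hence the probability that the walk follows `x₀, …, x_k` exactly and then has first coordinates
`y_{k+1}, …, y_n` is the probability of the exact path `x₀, …, x_k` times
`∏_{k ≤ i < n} P_{(y_i, 0),ω}(X₁^{(1)} = y_{i+1} - y_i)`; comparing `k = m + 1` with `k = m`
gives the identity.
-/

open Finset Pointwise

variable {d₁ d₂ : ℕ} {U : Finset (Pt d₁ d₂)} {ω : SEnv d₁ d₂}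

lemma pathP_succ {n : ℕ} (X : Fin (n + 2) → Pt d₁ d₂) :
    pathP d₁ d₂ ω (n + 1) X = pathP d₁ d₂ ω n (Fin.init X) *
      ω (X (Fin.last n).castSucc) (X (Fin.last (n + 1)) - X (Fin.last n).castSucc) := by
  rw [pathP, pathP, Fin.prod_univ_castSucc, mul_assoc]
  rfl

lemma pathP_snoc {n : ℕ} (X : Fin (n + 1) → Pt d₁ d₂) (p : Pt d₁ d₂) :
    pathP d₁ d₂ ω (n + 1) (Fin.snoc X p) =
      pathP d₁ d₂ ω n X * ω (X (Fin.last n)) (p - X (Fin.last n)) := by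
  rw [pathP_succ, Fin.init_snoc, Fin.snoc_last, Fin.snoc_castSucc]

lemma pathP_succ_of_seq {n : ℕ} (x : ℕ → Pt d₁ d₂) :
    pathP d₁ d₂ ω (n + 1) (fun i => x i) =
      pathP d₁ d₂ ω n (fun i => x i) * ω (x n) (x (n + 1) - x n) :=
  pathP_succ _

lemma pathP_ne_zero_iff {n : ℕ} {X : Fin (n + 1) → Pt d₁ d₂} :
    pathP d₁ d₂ ω n X ≠ 0 ↔ X 0 = 0 ∧ ∀ i : Fin n, ω (X i.castSucc) (X i.succ - X i.castSucc) ≠ 0 := by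
  simp [pathP, prod_eq_zero_iff]

lemma mem_nsmul_of_pathP_ne_zero (hω : IsEnv d₁ d₂ U ω) {n : ℕ} {X : Fin (n + 1) → Pt d₁ d₂}
    (h : pathP d₁ d₂ ω n X ≠ 0) (i : Fin (n + 1)) : X i ∈ (i : ℕ) • U := by
  obtain ⟨hX₀, hstep⟩ := pathP_ne_zero_iff.1 h
  induction i using Fin.induction with
  | zero => simp [hX₀]
  | succ i ih =>
    have hjump : X i.succ - X i.castSucc ∈ U := by_contra fun hU => hstep i ((hω _).2.1 _ hU)
    rw [Fin.val_succ, succ_nsmul, ← add_sub_cancel (X i.castSucc) (X i.succ)]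
    exact add_mem_add ih hjump

lemma finite_support_pathP (hω : IsEnv d₁ d₂ U ω) (n : ℕ) :
    (Function.support (pathP d₁ d₂ ω n)).Finite :=
  (Fintype.piFinset fun i : Fin (n + 1) => (i : ℕ) • U).finite_toSet.subset
    fun _ hX => Fintype.mem_piFinset.2 (mem_nsmul_of_pathP_ne_zero hω hX)

lemma tsum_ite_fst_eq_fstProb (x : Pt d₁ d₂) (a : Fin d₁ → ℤ) :
    ∑' p : Pt d₁ d₂, (if p.1 = a then ω x (p - x) else 0) = fstProb d₁ d₂ ω x (a - x.1) := by
  rw [← (Prod.mk_right_injective a).tsum_eq]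
  · simp only [if_true]
    exact (Equiv.subRight x.2).tsum_eq fun v => ω x (a - x.1, v)
  · rintro p hp
    exact ⟨p.2, Prod.ext (by by_contra h; simp [Ne.symm h] at hp) rfl⟩

def IsPinned (k : ℕ) (y : ℕ → Fin d₁ → ℤ) (z : ℕ → Fin d₂ → ℤ) {n : ℕ}
    (X : Fin (n + 1) → Pt d₁ d₂) : Prop :=
  (∀ i : Fin (n + 1), (i : ℕ) ≤ k → X i = (y i, z i)) ∧
    (∀ i : Fin (n + 1), k + 1 ≤ (i : ℕ) → (X i).1 = y i)

instance (k : ℕ) (y : ℕ → Fin d₁ → ℤ) (z : ℕ → Fin d₂ → ℤ) (n : ℕ) :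
    DecidablePred (IsPinned k y z (n := n)) :=
  fun _ => inferInstanceAs (Decidable (_ ∧ _))

/-- `P_{0,ω}(X_i = (y_i, z_i) for i ≤ k, X_i^{(1)} = y_i for k < i ≤ n)`. -/
noncomputable def pinnedProb (ω : SEnv d₁ d₂) (n k : ℕ) (y : ℕ → Fin d₁ → ℤ)
    (z : ℕ → Fin d₂ → ℤ) : ℝ :=
  ∑' X : Fin (n + 1) → Pt d₁ d₂, if IsPinned k y z X then pathP d₁ d₂ ω n X else 0

lemma IsPinned.fst_eq {k : ℕ} {y : ℕ → Fin d₁ → ℤ} {z : ℕ → Fin d₂ → ℤ} {n : ℕ}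
    {X : Fin (n + 1) → Pt d₁ d₂} (h : IsPinned k y z X) (i : Fin (n + 1)) : (X i).1 = y i := by
  by_cases hik : (i : ℕ) ≤ k
  · rw [h.1 i hik]
  · exact h.2 i (by omega)

lemma isPinned_snoc_iff {k n : ℕ} (hkn : k ≤ n) (y : ℕ → Fin d₁ → ℤ) (z : ℕ → Fin d₂ → ℤ)
    (X : Fin (n + 1) → Pt d₁ d₂) (p : Pt d₁ d₂) :
    IsPinned k y z (Fin.snoc X p : Fin (n + 2) → Pt d₁ d₂) ↔
      IsPinned k y z X ∧ p.1 = y (n + 1) := by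
  simp only [IsPinned, Fin.forall_fin_succ', Fin.snoc_castSucc, Fin.snoc_last, Fin.val_castSucc,
    Fin.val_last]
  constructor
  · rintro ⟨⟨h₁, -⟩, h₂, h₃⟩
    exact ⟨⟨h₁, h₂⟩, h₃ (by omega)⟩
  · rintro ⟨⟨h₁, h₂⟩, h₃⟩
    exact ⟨⟨h₁, fun h => absurd h (by omega)⟩, h₂, fun _ => h₃⟩

lemma pinnedProb_self (k : ℕ) (y : ℕ → Fin d₁ → ℤ) (z : ℕ → Fin d₂ → ℤ) :
    pinnedProb ω k k y z = pathP d₁ d₂ ω k (fun i => (y i, z i)) := by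
  rw [pinnedProb, ← tsum_ite_eq (fun i : Fin (k + 1) => (y i, z i)) (pathP d₁ d₂ ω k)]
  refine tsum_congr fun X => if_congr ⟨?_, ?_⟩ rfl rfl
  · rintro ⟨h, -⟩
    exact funext fun i => h i (Nat.lt_succ_iff.1 i.isLt)
  · rintro rfl
    exact ⟨fun _ _ => rfl, fun i hi => absurd i.isLt (by omega)⟩

lemma pinnedProb_succ (hω : IsEnv d₁ d₂ U ω) (haut : Autonomous d₁ d₂ ω) {n k : ℕ}
    (hkn : k ≤ n) (y : ℕ → Fin d₁ → ℤ) (z : ℕ → Fin d₂ → ℤ) :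
    pinnedProb ω (n + 1) k y z =
      pinnedProb ω n k y z * fstProb d₁ d₂ ω (y n, 0) (y (n + 1) - y n) := by
  let e := (Equiv.prodComm _ _).trans (Fin.snocEquiv fun _ : Fin (n + 2) => Pt d₁ d₂)
  have he : ∀ c, e c = Fin.snoc c.1 c.2 := fun _ => rfl
  rw [pinnedProb, ← e.tsum_eq, Summable.tsum_prod, pinnedProb, ← tsum_mul_right]
  · refine tsum_congr fun X => ?_
    simp only [he, isPinned_snoc_iff hkn, pathP_snoc, ← ite_zero_mul_ite_zero, tsum_mul_left]
    by_cases hX : IsPinned k y z X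
    · have hlast : (X (Fin.last n)).1 = y n := hX.fst_eq (Fin.last n)
      rw [tsum_ite_fst_eq_fstProb, hlast, haut _ (y n, 0) hlast]
    · rw [if_neg hX, zero_mul, zero_mul]
  · refine summable_of_hasFiniteSupport <|
      ((finite_support_pathP hω _).preimage e.injective.injOn).subset fun c hc => ?_
    by_contra h
    exact hc (by simp [show pathP d₁ d₂ ω (n + 1) (e c) = 0 by simpa using h])

lemma pinnedProb_eq (hω : IsEnv d₁ d₂ U ω) (haut : Autonomous d₁ d₂ ω) {n k : ℕ}
    (hkn : k ≤ n) (y : ℕ → Fin d₁ → ℤ) (z : ℕ → Fin d₂ → ℤ) :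
    pinnedProb ω n k y z = pathP d₁ d₂ ω k (fun i => (y i, z i)) *
      ∏ i ∈ Ico k n, fstProb d₁ d₂ ω (y i, 0) (y (i + 1) - y i) := by
  induction n, hkn using Nat.le_induction with
  | base => rw [pinnedProb_self, Ico_self, prod_empty, mul_one]
  | succ n hkn ih => rw [pinnedProb_succ hω haut hkn, ih, prod_Ico_succ_top hkn, mul_assoc]

theorem second_coordinate_quenched_markov
    (d₁ d₂ : ℕ)
    (U : Finset (Pt d₁ d₂))
    (ω : SEnv d₁ d₂) (hω : IsEnv d₁ d₂ U ω) (haut : Autonomous d₁ d₂ ω)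
    (m n : ℕ) (hmn : m + 1 < n)
    (y : ℕ → Fin d₁ → ℤ) (z : ℕ → Fin d₂ → ℤ) :
    (∑' X : Fin (n + 1) → Pt d₁ d₂,
        if (∀ i : Fin (n + 1), (i : ℕ) ≤ m + 1 → X i = (y i, z i)) ∧
           (∀ i : Fin (n + 1), m + 2 ≤ (i : ℕ) → (X i).1 = y i)
        then pathP d₁ d₂ ω n X else 0) *
      fstProb d₁ d₂ ω (y m, z m) (y (m + 1) - y m) =
    ω (y m, z m) ((y (m + 1), z (m + 1)) - (y m, z m)) *
      (∑' X : Fin (n + 1) → Pt d₁ d₂,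
        if (∀ i : Fin (n + 1), (i : ℕ) ≤ m → X i = (y i, z i)) ∧
           (∀ i : Fin (n + 1), m + 1 ≤ (i : ℕ) → (X i).1 = y i)
        then pathP d₁ d₂ ω n X else 0) := by
  change pinnedProb ω n (m + 1) y z * _ = _ * pinnedProb ω n m y z
  rw [pinnedProb_eq hω haut hmn.le, pinnedProb_eq hω haut (by omega),
    pathP_succ_of_seq fun i => (y i, z i),
    prod_eq_prod_Ico_succ_bot (by omega : m < n), haut (y m, z m) (y m, 0) rfl]
  ring

end AutonomousFirstCoordinates
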